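/- arXiv:1703.02022 — 4 statements merged into one kernel-verified Lean document; each statement's English description precedes it below -/
import Mathlib

section
/- (Gauss summation) For real parameters A, B, C with C > A + B and C not a nonpositive integer, the value of the hypergeometric function at 1 is ₂F₁(A,B,C;1) = Γ(C)Γ(C−A−B) / (Γ(C−A)Γ(C−B)), where Γ is the Gamma function. -/
open Polynomial Set Filter

/-- Term of the Gauss hypergeometric series: ((A)_n (B)_n / (C)_n) z^n / n!. -/
noncomputable def hypTerm (A B C z : ℝ) (n : ℕ) : ℝ :=
  ((ascPochhammer ℝ n).eval A * (ascPochhammer ℝ n).eval B /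
    (ascPochhammer ℝ n).eval C) * z ^ n / n.factorial

/-- The Gauss hypergeometric function ₂F₁(A,B,C;z), as the sum of its series. -/
noncomputable def hyp2F1 (A B C z : ℝ) : ℝ := ∑' n : ℕ, hypTerm A B C z n

/-!
At `z = 1` the terms `tₙ` of the series are `O(n ^ (A + B - C - 1))` by Euler's limit formula
`Γ(x) = lim mˣ m! / (x)ₘ₊₁`, so the series converges and `n tₙ → 0`. Telescoping `n tₙ` gives the
contiguous relation `C (C - A - B) F(C) = (C - A) (C - B) F(C + 1)`, hence
`F(C) = (C - A)ₘ (C - B)ₘ / ((C)ₘ (C - A - B)ₘ) · F(C + m)` for every `m`. As `m → ∞`,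
`F(C + m) → 1` by dominated convergence, and the Pochhammer ratio tends to
`Γ(C) Γ(C - A - B) / (Γ(C - A) Γ(C - B))`, again by Euler's limit formula.
-/

open Finset Topology Asymptotics

lemma ascPochhammer_eval_eq_prod {R : Type*} [CommSemiring R] (x : R) (n : ℕ) :
    (ascPochhammer R n).eval x = ∏ i ∈ range n, (x + i) := by
  induction n with
  | zero => simp
  | succ n ih => rw [ascPochhammer_succ_eval, ih, prod_range_succ]

lemma ascPochhammer_eval_ne_zero {x : ℝ} (hx : ∀ k : ℕ, x ≠ -k) (n : ℕ) :
    (ascPochhammer ℝ n).eval x ≠ 0 := by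
  rw [Ne, ascPochhammer_eval_eq_zero_iff]
  rintro ⟨k, -, hk⟩
  exact hx k (by linarith)

lemma abs_ascPochhammer_eval_le (x : ℝ) (n : ℕ) :
    |(ascPochhammer ℝ n).eval x| ≤ (ascPochhammer ℝ n).eval |x| := by
  rw [ascPochhammer_eval_eq_prod, ascPochhammer_eval_eq_prod, abs_prod]
  gcongr with i
  exact (abs_add_le _ _).trans_eq (by rw [Nat.abs_cast])

lemma ascPochhammer_eval_le_eval {R : Type*} [CommSemiring R] [PartialOrder R] [IsOrderedRing R]
    {x y : R} (hx : 0 ≤ x) (hxy : x ≤ y) (n : ℕ) :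
    (ascPochhammer R n).eval x ≤ (ascPochhammer R n).eval y := by
  rw [ascPochhammer_eval_eq_prod, ascPochhammer_eval_eq_prod]
  exact prod_le_prod (fun i _ => add_nonneg hx i.cast_nonneg) fun i _ => add_le_add_left hxy _

lemma tendsto_ascPochhammer_eval_atTop {n : ℕ} (hn : n ≠ 0) :
    Tendsto (fun x : ℝ => (ascPochhammer ℝ n).eval x) atTop atTop := by
  apply tendsto_atTop_of_leadingCoeff_nonneg
  · rw [degree_eq_natDegree (monic_ascPochhammer ℝ n).ne_zero, ascPochhammer_natDegree]
    exact_mod_cast Nat.pos_of_ne_zero hn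
  · rw [(monic_ascPochhammer ℝ n).leadingCoeff]
    exact zero_le_one

lemma GammaSeq_eq_div_ascPochhammer (x : ℝ) (m : ℕ) :
    Real.GammaSeq x m = (m : ℝ) ^ x * m.factorial / (ascPochhammer ℝ (m + 1)).eval x := by
  rw [Real.GammaSeq, ascPochhammer_eval_eq_prod]

/-- Euler's limit formula. When `x` is a nonpositive integer, `(x)ₘ₊₁` vanishes for large `m`,
and so does the limit since Mathlib's `Real.Gamma` is `0` at the poles. -/
lemma tendsto_rpow_mul_ascPochhammer_div (x : ℝ) {y : ℝ} (hy : ∀ k : ℕ, y ≠ -k) :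
    Tendsto (fun m : ℕ => (m : ℝ) ^ (y - x) *
        ((ascPochhammer ℝ (m + 1)).eval x / (ascPochhammer ℝ (m + 1)).eval y))
      atTop (𝓝 (Real.Gamma y / Real.Gamma x)) := by
  rcases em (∃ k : ℕ, x = -k) with ⟨k, rfl⟩ | hx
  · rw [(Real.Gamma_eq_zero_iff _).2 ⟨k, rfl⟩, div_zero]
    refine tendsto_const_nhds.congr' ?_
    filter_upwards [eventually_ge_atTop k] with m hm
    rw [(ascPochhammer_eval_eq_zero_iff _ _).2 ⟨k, by omega, by simp⟩, zero_div, mul_zero]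
  · rw [not_exists] at hx
    refine ((Real.GammaSeq_tendsto_Gamma y).div (Real.GammaSeq_tendsto_Gamma x)
      (Real.Gamma_ne_zero hx)).congr' ?_
    filter_upwards [eventually_ge_atTop 1] with m hm
    have hm : (0 : ℝ) < m := by exact_mod_cast hm
    have := ascPochhammer_eval_ne_zero hx (m + 1)
    have := ascPochhammer_eval_ne_zero hy (m + 1)
    rw [Pi.div_apply, GammaSeq_eq_div_ascPochhammer, GammaSeq_eq_div_ascPochhammer,
      Real.rpow_sub hm]
    field_simp

lemma tendsto_ascPochhammer_ratio {s t u v : ℝ} (hsum : s + t = u + v)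
    (hu : ∀ k : ℕ, u ≠ -k) (hv : ∀ k : ℕ, v ≠ -k) :
    Tendsto (fun m : ℕ => (ascPochhammer ℝ m).eval s * (ascPochhammer ℝ m).eval t /
        ((ascPochhammer ℝ m).eval u * (ascPochhammer ℝ m).eval v))
      atTop (𝓝 (Real.Gamma u * Real.Gamma v / (Real.Gamma s * Real.Gamma t))) := by
  rw [← tendsto_add_atTop_iff_nat 1]
  have h := (tendsto_rpow_mul_ascPochhammer_div s hu).mul (tendsto_rpow_mul_ascPochhammer_div t hv)
  rw [div_mul_div_comm] at h
  refine h.congr' ?_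
  filter_upwards [eventually_ge_atTop 1] with m hm
  have hm : (0 : ℝ) < m := by exact_mod_cast hm
  have hpow : (m : ℝ) ^ (u - s) * (m : ℝ) ^ (v - t) = 1 := by
    rw [← Real.rpow_add hm, show u - s + (v - t) = 0 by linarith, Real.rpow_zero]
  calc _ = (m : ℝ) ^ (u - s) * (m : ℝ) ^ (v - t) *
        ((ascPochhammer ℝ (m + 1)).eval s * (ascPochhammer ℝ (m + 1)).eval t /
          ((ascPochhammer ℝ (m + 1)).eval u * (ascPochhammer ℝ (m + 1)).eval v)) := by ring
    _ = _ := by rw [hpow, one_mul]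

lemma hasSum_sub_succ_of_tendsto {G : Type*} [AddCommGroup G] [TopologicalSpace G]
    [IsTopologicalAddGroup G] [T2Space G] {g : ℕ → G}
    (hs : Summable fun n => g n - g (n + 1)) (hg : Tendsto g atTop (𝓝 0)) :
    HasSum (fun n => g n - g (n + 1)) (g 0) := by
  convert hs.hasSum
  refine tendsto_nhds_unique ?_ hs.hasSum.tendsto_sum_nat
  simp_rw [sum_range_sub']
  simpa using tendsto_const_nhds.sub hg

section Series

variable {A B D : ℝ}

lemma hypTerm_one_succ (n : ℕ) :
    hypTerm A B D 1 (n + 1) =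
      hypTerm A B D 1 n * ((A + n) * (B + n) / ((D + n) * (n + 1))) := by
  simp only [hypTerm, ascPochhammer_succ_eval, Nat.factorial_succ, one_pow, mul_one,
    Nat.cast_mul, Nat.cast_succ, div_eq_mul_inv, mul_inv]
  ring

lemma add_natCast_mul_hypTerm_one_add_one (hD : ∀ k : ℕ, D ≠ -k) (n : ℕ) :
    (D + n) * hypTerm A B (D + 1) 1 n = D * hypTerm A B D 1 n := by
  have hshift : D * (ascPochhammer ℝ n).eval (D + 1) = (ascPochhammer ℝ n).eval D * (D + n) := by
    rw [← ascPochhammer_succ_eval]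
    simp [ascPochhammer_succ_left, eval_comp]
  have := ascPochhammer_eval_ne_zero hD n
  have hD1 : (ascPochhammer ℝ n).eval (D + 1) ≠ 0 :=
    ascPochhammer_eval_ne_zero (fun k hk => hD (k + 1) (by push_cast; linarith)) n
  simp only [hypTerm]
  field_simp
  linear_combination -(ascPochhammer ℝ n).eval A * (ascPochhammer ℝ n).eval B * hshift

lemma hypTerm_one_contiguous (hD : ∀ k : ℕ, D ≠ -k) (n : ℕ) :
    D * (D - A - B) * hypTerm A B D 1 n - (D - A) * (D - B) * hypTerm A B (D + 1) 1 n =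
      D * (n * hypTerm A B D 1 n) - D * ((n + 1 : ℕ) * hypTerm A B D 1 (n + 1)) := by
  have hDn : D + n ≠ 0 := fun h => hD n (by linarith)
  have hparam := add_natCast_mul_hypTerm_one_add_one (A := A) (B := B) hD n
  rw [hypTerm_one_succ]
  field_simp
  push_cast
  linear_combination (-(D - A) * (D - B) * (n + 1)) * hparam

lemma hypTerm_one_succ_isBigO (hD : ∀ k : ℕ, D ≠ -k) :
    (fun m : ℕ => hypTerm A B D 1 (m + 1)) =O[atTop] fun m : ℕ => (m : ℝ) ^ (A + B - D - 1) := by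
  have hone : ∀ k : ℕ, (1 : ℝ) ≠ -k := fun k h => by linarith [k.cast_nonneg (α := ℝ)]
  have hlim := (tendsto_rpow_mul_ascPochhammer_div A hD).mul
    (tendsto_rpow_mul_ascPochhammer_div B hone)
  refine ((isBigO_refl (fun m : ℕ => (m : ℝ) ^ (A + B - D - 1)) atTop).mul
    (hlim.isBigO_one ℝ)).congr' ?_ (.of_forall fun _ => mul_one _)
  filter_upwards [eventually_ge_atTop 1] with m hm
  have hm : (0 : ℝ) < m := by exact_mod_cast hm
  have hpow : (m : ℝ) ^ (A + B - D - 1) * (m : ℝ) ^ (D - A) * (m : ℝ) ^ (1 - B) = 1 := by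
    rw [← Real.rpow_add hm, ← Real.rpow_add hm, show A + B - D - 1 + (D - A) + (1 - B) = 0 by ring,
      Real.rpow_zero]
  rw [hypTerm, ascPochhammer_eval_one, one_pow, mul_one]
  linear_combination (ascPochhammer ℝ (m + 1)).eval A / (ascPochhammer ℝ (m + 1)).eval D *
    ((ascPochhammer ℝ (m + 1)).eval B / ((m + 1).factorial : ℝ)) * hpow

lemma summable_hypTerm_one (hr : A + B < D) (hD : ∀ k : ℕ, D ≠ -k) :
    Summable (hypTerm A B D 1) :=
  (summable_nat_add_iff 1).1 <|
    summable_of_isBigO_nat (Real.summable_nat_rpow.2 (by linarith)) (hypTerm_one_succ_isBigO hD)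

lemma tendsto_natCast_mul_hypTerm_one (hr : A + B < D) (hD : ∀ k : ℕ, D ≠ -k) :
    Tendsto (fun n : ℕ => (n : ℝ) * hypTerm A B D 1 n) atTop (𝓝 0) := by
  rw [← tendsto_add_atTop_iff_nat 1]
  have hterm : Tendsto (fun m : ℕ => hypTerm A B D 1 (m + 1)) atTop (𝓝 0) :=
    (tendsto_add_atTop_iff_nat 1).2 (summable_hypTerm_one hr hD).tendsto_atTop_zero
  have hpow : Tendsto (fun m : ℕ => (m : ℝ) * (m : ℝ) ^ (A + B - D - 1)) atTop (𝓝 0) := by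
    refine (((tendsto_rpow_neg_atTop (y := D - A - B) (by linarith)).comp
      tendsto_natCast_atTop_atTop)).congr' ?_
    filter_upwards [eventually_ge_atTop 1] with m hm
    have hm : (0 : ℝ) < m := by exact_mod_cast hm
    rw [Function.comp_apply, show -(D - A - B) = 1 + (A + B - D - 1) by ring,
      Real.rpow_add hm, Real.rpow_one]
  have hmul := ((isBigO_refl (fun m : ℕ => (m : ℝ)) atTop).mul
    (hypTerm_one_succ_isBigO hD)).trans_tendsto hpow
  simpa [add_mul] using hmul.add hterm

lemma hyp2F1_one_contiguous (hr : A + B < D) (hD : ∀ k : ℕ, D ≠ -k) :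
    D * (D - A - B) * hyp2F1 A B D 1 = (D - A) * (D - B) * hyp2F1 A B (D + 1) 1 := by
  have hD1 : ∀ k : ℕ, D + 1 ≠ -k := fun k hk => hD (k + 1) (by push_cast; linarith)
  have hsum := ((summable_hypTerm_one hr hD).hasSum.mul_left (D * (D - A - B))).sub
    ((summable_hypTerm_one (A := A) (B := B) (by linarith) hD1).hasSum.mul_left ((D - A) * (D - B)))
  simp_rw [hypTerm_one_contiguous hD] at hsum
  have htel := hsum.unique (hasSum_sub_succ_of_tendsto hsum.summable
    (by simpa using (tendsto_natCast_mul_hypTerm_one hr hD).const_mul D))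
  simp only [Nat.cast_zero, zero_mul, mul_zero] at htel
  rw [hyp2F1, hyp2F1]
  linarith

end Series

lemma abs_hypTerm_one_le {A B a b D D' : ℝ} (hA : |A| ≤ a) (hB : |B| ≤ b) (hD : 0 < D)
    (hDD' : D ≤ D') (n : ℕ) : |hypTerm A B D' 1 n| ≤ hypTerm a b D 1 n := by
  have hpos := ascPochhammer_pos n D hD
  have hpos' := ascPochhammer_pos n D' (hD.trans_le hDD')
  have hA' := (abs_ascPochhammer_eval_le A n).trans
    (ascPochhammer_eval_le_eval (abs_nonneg A) hA n)
  have hB' := (abs_ascPochhammer_eval_le B n).trans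
    (ascPochhammer_eval_le_eval (abs_nonneg B) hB n)
  have hb := (abs_nonneg _).trans hB'
  have := ascPochhammer_eval_le_eval hD.le hDD' n
  simp only [hypTerm, one_pow, mul_one, abs_div, abs_mul, Nat.abs_cast, abs_of_pos hpos']
  gcongr
  · exact mul_nonneg ((abs_nonneg _).trans hA') hb
  · exact (abs_nonneg _).trans hA'

lemma tendsto_hypTerm_one_atTop (A B : ℝ) (n : ℕ) :
    Tendsto (fun D => hypTerm A B D 1 n) atTop (𝓝 (if n = 0 then 1 else 0)) := by
  rcases eq_or_ne n 0 with rfl | hn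
  · simp [hypTerm]
  · simp only [hn, if_false]
    have h := ((tendsto_ascPochhammer_eval_atTop hn).inv_tendsto_atTop).const_mul
      ((ascPochhammer ℝ n).eval A * (ascPochhammer ℝ n).eval B / n.factorial)
    rw [mul_zero] at h
    refine h.congr fun D => ?_
    simp only [hypTerm, one_pow, mul_one, Pi.inv_apply]
    ring

lemma tendsto_hyp2F1_one_atTop (A B : ℝ) :
    Tendsto (fun D => hyp2F1 A B D 1) atTop (𝓝 1) := by
  set a := max |A| |B|
  have ha : 0 ≤ a := (abs_nonneg A).trans (le_max_left _ _)
  have hsum : Summable (hypTerm a a (2 * a + 1) 1) :=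
    summable_hypTerm_one (by linarith) fun k hk => by linarith [k.cast_nonneg (α := ℝ)]
  have h := tendsto_tsum_of_dominated_convergence hsum (tendsto_hypTerm_one_atTop A B) <| by
    filter_upwards [eventually_ge_atTop (2 * a + 1)] with D hD n
    exact abs_hypTerm_one_le (le_max_left _ _) (le_max_right _ _) (by linarith) hD n
  simpa [hyp2F1] using h

lemma hyp2F1_one_eq_ascPochhammer_ratio_mul {A B C : ℝ} (hr : A + B < C)
    (hC : ∀ k : ℕ, C ≠ -k) (m : ℕ) :
    hyp2F1 A B C 1 = (ascPochhammer ℝ m).eval (C - A) * (ascPochhammer ℝ m).eval (C - B) /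
        ((ascPochhammer ℝ m).eval C * (ascPochhammer ℝ m).eval (C - A - B)) *
      hyp2F1 A B (C + m) 1 := by
  induction m with
  | zero => simp
  | succ m ih =>
    have hm : (0 : ℝ) ≤ m := m.cast_nonneg
    have hCm : ∀ k : ℕ, C + m ≠ -k := fun k hk => hC (k + m) (by push_cast; linarith)
    have hrec := hyp2F1_one_contiguous (A := A) (B := B) (by linarith) hCm
    have hCm0 : C + m ≠ 0 := by simpa using hCm 0
    have hCABm : C - A - B + m ≠ 0 := by linarith
    have := ascPochhammer_eval_ne_zero hC m
    have := (ascPochhammer_pos m (C - A - B) (by linarith)).ne'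
    rw [ih]
    simp only [ascPochhammer_succ_eval, Nat.cast_succ, ← add_assoc]
    field_simp
    linear_combination (ascPochhammer ℝ m).eval (C - A) * (ascPochhammer ℝ m).eval (C - B) * hrec

/-- Gauss summation: ₂F₁(A,B,C;1) = Γ(C)Γ(C−A−B)/(Γ(C−A)Γ(C−B)). -/
theorem gauss_summation (A B C : ℝ) (hC : C > A + B)
    (hCint : ∀ n : ℕ, C ≠ -(n : ℝ)) :
    hyp2F1 A B C 1 =
      Real.Gamma C * Real.Gamma (C - A - B) /
        (Real.Gamma (C - A) * Real.Gamma (C - B)) := by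
  have hratio := tendsto_ascPochhammer_ratio (s := C - A) (t := C - B) (u := C)
    (v := C - A - B) (by ring) hCint fun k hk => by linarith [k.cast_nonneg (α := ℝ)]
  have hlim := (tendsto_hyp2F1_one_atTop A B).comp
    (tendsto_atTop_add_const_left atTop C tendsto_natCast_atTop_atTop)
  refine tendsto_nhds_unique (l := (atTop : Filter ℕ)) (tendsto_const_nhds.congr
    (hyp2F1_one_eq_ascPochhammer_ratio_mul hC hCint)) ?_
  simpa using hratio.mul hlim
end

section
/- (Euler transformation) For real parameters A, B, C with C not a nonpositive integer, one has ₂F₁(A,B,C;z) = (1−z)^{C−A−B} ₂F₁(C−A, C−B, C; z) for all z ∈ [0,1). -/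
/-!
Expand `(1 - z) ^ (C - A - B) = ∑ (A + B - C)ₘ zᵐ / m!` by the binomial series. For `|z| < 1`
both series on the right converge absolutely, so their product is their Cauchy product, whose
coefficients are those of `₂F₁(A, B, C; z)` by the Pfaff–Saalschütz summation. That identity goes
by induction on `n`: multiplying the `(n + 1)`-st Cauchy product coefficient by `n + 1` acts as a
derivation, so both sides obey the same first-order recurrence, up to a telescoping sum (a
Wilf–Zeilberger certificate).
-/

open Polynomial Set Filter

open Finset FormalMultilinearSeries

section ProductRule

variable {R : Type*} [CommRing R] {b d β δ : ℕ → R}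

theorem succ_mul_sum_antidiagonal_succ (hb : ∀ k : ℕ, ((k : R) + 1) * b (k + 1) = β k * b k)
    (hd : ∀ m : ℕ, ((m : R) + 1) * d (m + 1) = δ m * d m) (n : ℕ) :
    ((n : R) + 1) * ∑ p ∈ antidiagonal (n + 1), b p.1 * d p.2 =
      ∑ p ∈ antidiagonal n, (β p.1 + δ p.2) * (b p.1 * d p.2) := by
  have hsplit : ((n : R) + 1) * ∑ p ∈ antidiagonal (n + 1), b p.1 * d p.2 =
      ∑ p ∈ antidiagonal (n + 1), (p.1 : R) * b p.1 * d p.2 +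
        ∑ p ∈ antidiagonal (n + 1), b p.1 * ((p.2 : R) * d p.2) := by
    rw [mul_sum, ← sum_add_distrib]
    refine sum_congr rfl fun p hp => ?_
    have hn : (p.1 : R) + p.2 = n + 1 := by
      rw [← Nat.cast_add, mem_antidiagonal.mp hp, Nat.cast_succ]
    rw [← hn]
    ring
  rw [hsplit, Nat.sum_antidiagonal_succ, Nat.sum_antidiagonal_succ']
  simp only [Nat.cast_zero, zero_mul, mul_zero, zero_add, Nat.cast_add, Nat.cast_one, hb, hd,
    ← sum_add_distrib]
  exact sum_congr rfl fun p _ => by ring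

theorem sum_antidiagonal_mul_sub_mul_eq_zero
    (hb : ∀ k : ℕ, ((k : R) + 1) * b (k + 1) = β k * b k)
    (hd : ∀ m : ℕ, ((m : R) + 1) * d (m + 1) = δ m * d m) (n : ℕ) :
    ∑ p ∈ antidiagonal n, ((p.2 : R) * β p.1 - p.1 * δ p.2) * (b p.1 * d p.2) = 0 := by
  have h := (Nat.sum_antidiagonal_succ (f := fun p => (p.1 : R) * p.2 * (b p.1 * d p.2))
    (n := n)).symm.trans Nat.sum_antidiagonal_succ'
  simp only [Nat.cast_zero, zero_mul, mul_zero, zero_add, Nat.cast_add, Nat.cast_one] at h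
  rw [← sub_eq_zero, ← sum_sub_distrib] at h
  rw [← h]
  refine sum_congr rfl fun p _ => ?_
  linear_combination (p.1 : R) * b p.1 * hd p.2 - (p.2 : R) * d p.2 * hb p.1

end ProductRule

section PfaffSaalschutz

open Nat

variable {K : Type*} [Field K] [CharZero K]

theorem succ_mul_ordinaryHypergeometricCoefficient_succ {a b c : K} {n : ℕ} (hc : c + n ≠ 0) :
    ((n : K) + 1) * ordinaryHypergeometricCoefficient a b c (n + 1) =
      (a + n) * (b + n) / (c + n) * ordinaryHypergeometricCoefficient a b c n := by
  have : ((n : K) + 1) ≠ 0 := n.cast_add_one_ne_zero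
  simp only [ordinaryHypergeometricCoefficient, ascPochhammer_succ_eval, factorial_succ,
    cast_mul, cast_add, cast_one]
  by_cases hcn : (ascPochhammer K n).eval c = 0
  · simp [hcn]
  field_simp

theorem succ_mul_ascPochhammer_div_factorial_succ (a : K) (n : ℕ) :
    ((n : K) + 1) * ((ascPochhammer K (n + 1)).eval a / (n + 1)!) =
      (a + n) * ((ascPochhammer K n).eval a / n !) := by
  have : ((n : K) + 1) ≠ 0 := n.cast_add_one_ne_zero
  rw [ascPochhammer_succ_eval, factorial_succ, cast_mul, cast_add_one]
  field_simp

-- The Pfaff–Saalschütz summation, in the form of a Cauchy product of hypergeometric coefficients.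
theorem sum_antidiagonal_ascPochhammer_mul_ordinaryHypergeometricCoefficient {A B C : K}
    (hC : ∀ k : ℕ, (k : K) ≠ -C) (n : ℕ) :
    ∑ p ∈ antidiagonal n, (ascPochhammer K p.1).eval (A + B - C) / p.1 ! *
        ordinaryHypergeometricCoefficient (C - A) (C - B) C p.2 =
      ordinaryHypergeometricCoefficient A B C n := by
  have hC' (k : ℕ) : C + k ≠ 0 := fun h => hC k (by linear_combination h)
  set b : ℕ → K := fun k => (ascPochhammer K k).eval (A + B - C) / (k !)
  set d : ℕ → K := ordinaryHypergeometricCoefficient (C - A) (C - B) C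
  set β : ℕ → K := fun k => A + B - C + k
  set δ : ℕ → K := fun m => (C - A + m) * (C - B + m) / (C + m)
  have hb : ∀ k : ℕ, ((k : K) + 1) * b (k + 1) = β k * b k :=
    succ_mul_ascPochhammer_div_factorial_succ (A + B - C)
  have hd (m : ℕ) : ((m : K) + 1) * d (m + 1) = δ m * d m :=
    succ_mul_ordinaryHypergeometricCoefficient_succ (hC' m)
  have hratio (k m : ℕ) : β k + δ m =
      (A + (k + m)) * (B + (k + m)) / (C + (k + m)) - (m * β k - k * δ m) / (C + (k + m)) := by
    have hkm : C + ((k : K) + m) ≠ 0 := by exact_mod_cast hC' (k + m)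
    have hm := hC' m
    simp only [β, δ]
    field_simp
    ring
  induction n with
  | zero => simp [d]
  | succ n ih =>
    refine mul_left_cancel₀ n.cast_add_one_ne_zero ?_
    rw [succ_mul_sum_antidiagonal_succ hb hd,
      succ_mul_ordinaryHypergeometricCoefficient_succ (hC' n), ← ih, mul_sum]
    have hsplit : ∀ p ∈ antidiagonal n, (β p.1 + δ p.2) * (b p.1 * d p.2) =
        (A + n) * (B + n) / (C + n) * (b p.1 * d p.2) -
          (C + n)⁻¹ * ((p.2 * β p.1 - p.1 * δ p.2) * (b p.1 * d p.2)) := by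
      rintro ⟨k, m⟩ hkm
      rw [← mem_antidiagonal.mp hkm, Nat.cast_add, hratio]
      ring
    rw [sum_congr rfl hsplit, sum_sub_distrib, ← mul_sum, ← mul_sum,
      sum_antidiagonal_mul_sub_mul_eq_zero hb hd, mul_zero, sub_zero]

end PfaffSaalschutz

section Analytic

open Nat

theorem Real.mem_eball_zero_one_iff {x : ℝ} : x ∈ Metric.eball 0 1 ↔ |x| < 1 := by
  rw [← ENNReal.ofReal_one, Metric.eball_ofReal, mem_ball_zero_iff, Real.norm_eq_abs]

theorem Ring.choose_add_sub_one_eq_ascPochhammer_div {K : Type*} [Field K] [CharZero K]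
    (a : K) (n : ℕ) : Ring.choose (a + n - 1) n = (ascPochhammer K n).eval a / n ! := by
  rw [← Ring.multichoose_eq, eq_div_iff (cast_ne_zero.mpr n.factorial_ne_zero), mul_comm,
    ← nsmul_eq_mul, Ring.factorial_nsmul_multichoose_eq_ascPochhammer,
    ascPochhammer_smeval_eq_eval]

theorem Real.one_sub_rpow_neg_hasFPowerSeriesOnBall_zero (s : ℝ) :
    HasFPowerSeriesOnBall (fun x ↦ (1 - x) ^ (-s))
      (ofScalars ℝ fun n ↦ (ascPochhammer ℝ n).eval s / n !) 0 1 := by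
  have h := Real.one_div_one_sub_rpow_hasFPowerSeriesOnBall_zero s
  simp only [Ring.choose_add_sub_one_eq_ascPochhammer_div] at h
  refine h.congr fun x hx => ?_
  have hx : 0 ≤ 1 - x := by linarith [le_abs_self x, Real.mem_eball_zero_one_iff.mp hx]
  simp only [Real.rpow_neg hx, one_div]

theorem one_le_ordinaryHypergeometricSeries_radius {𝕂 : Type*} (𝔸 : Type*) [RCLike 𝕂]
    [NormedDivisionRing 𝔸] [NormedAlgebra 𝕂 𝔸] {a b c : 𝕂} (hc : ∀ k : ℕ, (k : 𝕂) ≠ -c) :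
    1 ≤ (ordinaryHypergeometricSeries 𝔸 a b c).radius := by
  by_cases ha : ∃ k : ℕ, a = -k
  · obtain ⟨k, rfl⟩ := ha
    simp [ordinaryHypergeometric_radius_top_of_neg_nat₁]
  by_cases hb : ∃ k : ℕ, b = -k
  · obtain ⟨k, rfl⟩ := hb
    simp [ordinaryHypergeometric_radius_top_of_neg_nat₂]
  push Not at ha hb
  refine (ordinaryHypergeometricSeries_radius_eq_one 𝔸 a b c fun k => ⟨?_, ?_, hc k⟩).ge
  · exact fun h => ha k (by rw [h, neg_neg])
  · exact fun h => hb k (by rw [h, neg_neg])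

theorem hypTerm_eq_ordinaryHypergeometricCoefficient_mul_pow (A B C z : ℝ) (n : ℕ) :
    hypTerm A B C z n = ordinaryHypergeometricCoefficient A B C n * z ^ n := by
  rw [hypTerm]
  ring

end Analytic

/-- Euler transformation: ₂F₁(A,B,C;z) = (1−z)^{C−A−B} ₂F₁(C−A,C−B,C;z) on [0,1). -/
theorem hyp2F1_euler_transformation (A B C : ℝ) (hCint : ∀ n : ℕ, C ≠ -(n : ℝ)) :
    ∀ z ∈ Set.Ico (0 : ℝ) 1,
      hyp2F1 A B C z = (1 - z) ^ (C - A - B) * hyp2F1 (C - A) (C - B) C z := by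
  rintro z ⟨hz0, hz1⟩
  have hC (k : ℕ) : (k : ℝ) ≠ -C := fun h => hCint k (by rw [h, neg_neg])
  have hz : z ∈ Metric.eball (0 : ℝ) 1 :=
    Real.mem_eball_zero_one_iff.mpr (abs_lt.mpr ⟨by linarith, hz1⟩)
  set p := ofScalars ℝ fun n ↦ (ascPochhammer ℝ n).eval (A + B - C) / n.factorial
  set q := ordinaryHypergeometricSeries ℝ (C - A) (C - B) C
  have hbinom := Real.one_sub_rpow_neg_hasFPowerSeriesOnBall_zero (A + B - C)
  have hp : ∑' n, p n (fun _ => z) = (1 - z) ^ (C - A - B) := by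
    rw [(hbinom.hasSum hz).tsum_eq]
    ring_nf
  have hp_norm := p.summable_norm_apply (Metric.eball_subset_eball hbinom.r_le hz)
  have hq_norm := q.summable_norm_apply
    (Metric.eball_subset_eball (one_le_ordinaryHypergeometricSeries_radius ℝ hC) hz)
  have hcoeff (n : ℕ) :
      ∑ i ∈ antidiagonal n, p i.1 (fun _ => z) * q i.2 (fun _ => z) = hypTerm A B C z n := by
    simp only [p, q, ordinaryHypergeometricSeries, ofScalars_apply_eq, smul_eq_mul]
    rw [hypTerm_eq_ordinaryHypergeometricCoefficient_mul_pow,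
      ← sum_antidiagonal_ascPochhammer_mul_ordinaryHypergeometricCoefficient hC, sum_mul]
    refine sum_congr rfl fun i hi => ?_
    rw [← mem_antidiagonal.mp hi, pow_add]
    ring
  calc hyp2F1 A B C z = ∑' n, ∑ i ∈ antidiagonal n, p i.1 (fun _ => z) * q i.2 (fun _ => z) :=
        tsum_congr fun n => (hcoeff n).symm
    _ = (∑' n, p n (fun _ => z)) * ∑' n, q n (fun _ => z) :=
        (tsum_mul_tsum_eq_tsum_sum_antidiagonal_of_summable_norm hp_norm hq_norm).symm
    _ = (1 - z) ^ (C - A - B) * hyp2F1 (C - A) (C - B) C z := by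
      simp only [hp, hyp2F1, hypTerm_eq_ordinaryHypergeometricCoefficient_mul_pow, q,
        ordinaryHypergeometricSeries, ofScalars_apply_eq, smul_eq_mul]
end

section
/- If C > 0 and AB > 0, then the hypergeometric function F(z) = ₂F₁(A,B,C;z) is (strictly) increasing on [0,1). -/
open Polynomial Set Filter

/-!
`F = ₂F₁(A,B;C;·)` solves the hypergeometric equation
`z (1 - z) F'' + (C - (A + B + 1) z) F' - A B F = 0`, which in self-adjoint form reads
`(z^C (1 - z)^(A + B + 1 - C) F')' = A B z^(C - 1) (1 - z)^(A + B - C) F`.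
While `F` stays positive, the bracket on the left, which vanishes at `0`, increases and so is
positive, whence `F' > 0`. As `F 0 = 1`, `F` thus has no first zero in `[0, 1)`, and `F' > 0` on
all of `(0, 1)`. The equation itself is checked on coefficients, through
`F' = (A B / C) ₂F₁(A + 1, B + 1; C + 1; ·)`.
-/

open scoped Topology

theorem hasSum_mul_pow_of_succ {R : Type*} [CommRing R] [TopologicalSpace R]
    [IsTopologicalRing R] {b : ℕ → R} {z s : R} (hb : b 0 = 0)
    (h : HasSum (fun n => b (n + 1) * z ^ n) s) : HasSum (fun n => b n * z ^ n) (z * s) := by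
  rw [← hasSum_nat_add_iff' 1, Finset.sum_range_one, hb, zero_mul, sub_zero]
  exact (h.mul_left z).congr_fun fun n => by ring

theorem hasDerivAt_tsum_mul_pow {𝕜 : Type*} [RCLike 𝕜] {a : ℕ → 𝕜} {r : ℝ} {z : 𝕜}
    (ha : Summable fun n => (n + 1) * ‖a (n + 1)‖ * r ^ n) (hz : ‖z‖ < r) :
    HasDerivAt (fun x => ∑' n, a n * x ^ n) (∑' n, (n + 1) * a (n + 1) * z ^ n) z := by
  have hu : Summable fun n : ℕ => n * ‖a n‖ * r ^ (n - 1) := by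
    rw [← summable_nat_add_iff 1]
    simpa using ha
  have hderiv := hasDerivAt_tsum_of_isPreconnected hu Metric.isOpen_ball
    (convex_ball (0 : 𝕜) r).isPreconnected
    (fun n y _ => (hasDerivAt_pow n y).const_mul (a n))
    (fun n y hy => by
      rw [norm_mul, norm_mul, norm_pow, RCLike.norm_natCast, mul_left_comm, ← mul_assoc]
      gcongr
      exact (mem_ball_zero_iff.mp hy).le)
    (Metric.mem_ball_self ((norm_nonneg z).trans_lt hz))
    (hasSum_single 0 fun n hn => by simp [hn]).summable
    (mem_ball_zero_iff.mpr hz)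
  refine hderiv.congr_deriv ?_
  rw [tsum_eq_zero_add']
  · simp [mul_left_comm, mul_assoc]
  · refine .of_norm_bounded ha fun n => ?_
    rw [norm_mul, norm_mul, norm_pow, RCLike.norm_natCast, Nat.add_sub_cancel,
      Nat.cast_succ, mul_left_comm, ← mul_assoc]
    gcongr

theorem hyp2F1_eq_ordinaryHypergeometric (A B C : ℝ) : hyp2F1 A B C = ₂F₁ A B C := by
  ext z
  rw [hyp2F1, ordinaryHypergeometric_eq_tsum]
  exact tsum_congr fun n => by
    rw [hypTerm, smul_eq_mul]
    ring

section Hyp2F1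

variable {A B C : ℝ}

theorem ordinaryHypergeometricCoefficient_succ (hC : 0 < C) (n : ℕ) :
    ordinaryHypergeometricCoefficient A B C (n + 1) =
      ordinaryHypergeometricCoefficient A B C n * ((A + n) * (B + n) / ((n + 1) * (C + n))) := by
  have := (ascPochhammer_pos n C hC).ne'
  have : C + n ≠ 0 := by positivity
  simp only [ordinaryHypergeometricCoefficient, ascPochhammer_succ_eval, Nat.factorial_succ,
    Nat.cast_mul, Nat.cast_succ]
  field_simp

theorem succ_mul_ordinaryHypergeometricCoefficient_succ_s6 (hC : 0 < C) (n : ℕ) :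
    (n + 1) * ordinaryHypergeometricCoefficient A B C (n + 1) =
      A * B / C * ordinaryHypergeometricCoefficient (A + 1) (B + 1) (C + 1) n := by
  have := (ascPochhammer_pos n (C + 1) (by linarith)).ne'
  have := hC.ne'
  simp only [ordinaryHypergeometricCoefficient, ascPochhammer_succ_left, eval_mul, eval_X,
    eval_comp, eval_add, eval_one, Nat.factorial_succ, Nat.cast_mul, Nat.cast_succ]
  field_simp

theorem tendsto_ordinaryHypergeometricCoefficient_ratio (A B C : ℝ) :
    Tendsto (fun n : ℕ => (A + n) * (B + n) / ((n + 1) * (C + n))) atTop (𝓝 1) := by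
  have h := (tendsto_add_mul_div_add_mul_atTop_nhds A 1 1 one_ne_zero).mul
    (tendsto_add_mul_div_add_mul_atTop_nhds B C 1 one_ne_zero)
  simp only [one_mul, div_one, mul_one] at h
  refine h.congr fun n => ?_
  rw [add_comm 1 (n : ℝ), mul_div_mul_comm]

theorem summable_ordinaryHypergeometricCoefficient_mul_pow (hC : 0 < C) {z : ℝ} (hz : |z| < 1) :
    Summable fun n => ordinaryHypergeometricCoefficient A B C n * z ^ n := by
  obtain ⟨r, hzr, hr1⟩ := exists_between hz
  refine summable_of_ratio_norm_eventually_le hr1 ?_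
  have hlim := ((tendsto_ordinaryHypergeometricCoefficient_ratio A B C).abs.mul_const |z|)
  rw [abs_one, one_mul] at hlim
  filter_upwards [hlim.eventually_lt_const hzr] with n hn
  rw [ordinaryHypergeometricCoefficient_succ hC, pow_succ, Real.norm_eq_abs, Real.norm_eq_abs]
  calc _ = |(A + n) * (B + n) / ((n + 1) * (C + n))| * |z| *
        |ordinaryHypergeometricCoefficient A B C n * z ^ n| := by
        simp only [abs_mul]
        ring
    _ ≤ r * |ordinaryHypergeometricCoefficient A B C n * z ^ n| := by gcongr

theorem hasSum_hyp2F1 (hC : 0 < C) {z : ℝ} (hz : |z| < 1) :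
    HasSum (fun n => ordinaryHypergeometricCoefficient A B C n * z ^ n) (hyp2F1 A B C z) := by
  rw [hyp2F1_eq_ordinaryHypergeometric, ordinaryHypergeometric_eq_tsum]
  exact (summable_ordinaryHypergeometricCoefficient_mul_pow hC hz).hasSum

theorem hasSum_succ_mul_ordinaryHypergeometricCoefficient_succ (hC : 0 < C) {z : ℝ}
    (hz : |z| < 1) :
    HasSum (fun n : ℕ => (n + 1) * ordinaryHypergeometricCoefficient A B C (n + 1) * z ^ n)
      (A * B / C * hyp2F1 (A + 1) (B + 1) (C + 1) z) := by
  refine ((hasSum_hyp2F1 (by linarith) hz).mul_left (A * B / C)).congr_fun fun n => ?_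
  rw [succ_mul_ordinaryHypergeometricCoefficient_succ_s6 hC, mul_assoc]

theorem hasDerivAt_hyp2F1 (hC : 0 < C) {z : ℝ} (hz : |z| < 1) :
    HasDerivAt (hyp2F1 A B C) (A * B / C * hyp2F1 (A + 1) (B + 1) (C + 1) z) z := by
  obtain ⟨r, hzr, hr1⟩ := exists_between hz
  have hr0 : 0 < r := (abs_nonneg z).trans_lt hzr
  have hsummable : Summable fun n : ℕ =>
      (n + 1) * ‖ordinaryHypergeometricCoefficient A B C (n + 1)‖ * r ^ n := by
    simp_rw [Real.norm_eq_abs]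
    have hshift := summable_ordinaryHypergeometricCoefficient_mul_pow (A := A + 1) (B := B + 1)
      (C := C + 1) (by linarith) (abs_lt.mpr ⟨by linarith, hr1⟩)
    refine (hshift.abs.mul_left |A * B / C|).congr fun n => ?_
    rw [← abs_mul, ← mul_assoc, ← succ_mul_ordinaryHypergeometricCoefficient_succ_s6 hC, abs_mul,
      abs_mul, abs_pow, abs_of_pos hr0, abs_of_nonneg (by positivity : (0 : ℝ) ≤ n + 1)]
  have hF : hyp2F1 A B C = fun x => ∑' n, ordinaryHypergeometricCoefficient A B C n * x ^ n := by
    rw [hyp2F1_eq_ordinaryHypergeometric, ordinaryHypergeometric_eq_tsum]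
    rfl
  rw [hF, ← (hasSum_succ_mul_ordinaryHypergeometricCoefficient_succ hC hz).tsum_eq]
  exact hasDerivAt_tsum_mul_pow hsummable (by rwa [Real.norm_eq_abs])

theorem hypergeometric_ode_of_hasSum {A B C z F F' F'' : ℝ} {c : ℕ → ℝ}
    (hrec : ∀ n : ℕ, (n + C) * ((n + 1) * c (n + 1)) = (n + A) * (n + B) * c n)
    (hF : HasSum (fun n => c n * z ^ n) F)
    (hF' : HasSum (fun n : ℕ => (n + 1) * c (n + 1) * z ^ n) F')
    (hF'' : HasSum (fun n : ℕ => (n + 1) * ((n + 2) * c (n + 2)) * z ^ n) F'') :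
    z * (1 - z) * F'' + (C - (A + B + 1) * z) * F' - A * B * F = 0 := by
  have hzF' := hasSum_mul_pow_of_succ (b := fun n : ℕ => n * c n)
    (by rw [Nat.cast_zero, zero_mul]) (hF'.congr_fun fun n => by rw [Nat.cast_succ])
  have hzF'' := hasSum_mul_pow_of_succ (b := fun n : ℕ => n * ((n + 1) * c (n + 1)))
    (by rw [Nat.cast_zero, zero_mul]) (hF''.congr_fun fun n => by push_cast; ring)
  have hz2F'' := hasSum_mul_pow_of_succ (b := fun n : ℕ => (n - 1) * n * c n)
    (by rw [Nat.cast_zero, mul_zero, zero_mul]) (hzF''.congr_fun fun n => by push_cast; ring)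
  have hsum := (hzF''.add (hF'.mul_left C)).sub
    ((hz2F''.add (hzF'.mul_left (A + B + 1))).add (hF.mul_left (A * B)))
  rw [show (fun n => _) = fun _ => (0 : ℝ) from funext fun n => by
    linear_combination z ^ n * hrec n] at hsum
  linear_combination hsum.unique hasSum_zero

theorem hyp2F1_ode (hC : 0 < C) {z : ℝ} (hz : |z| < 1) :
    z * (1 - z) * (A * B / C * ((A + 1) * (B + 1) / (C + 1) * hyp2F1 (A + 2) (B + 2) (C + 2) z))
      + (C - (A + B + 1) * z) * (A * B / C * hyp2F1 (A + 1) (B + 1) (C + 1) z)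
      - A * B * hyp2F1 A B C z = 0 := by
  refine hypergeometric_ode_of_hasSum (fun n => ?_) (hasSum_hyp2F1 hC hz)
    (hasSum_succ_mul_ordinaryHypergeometricCoefficient_succ hC hz) ?_
  · rw [ordinaryHypergeometricCoefficient_succ hC]
    field_simp
    ring
  · have h := (hasSum_succ_mul_ordinaryHypergeometricCoefficient_succ (A := A + 1) (B := B + 1)
      (C := C + 1) (by linarith) hz).mul_left (A * B / C)
    simp only [add_assoc, one_add_one_eq_two] at h
    refine h.congr_fun fun n => ?_
    have := succ_mul_ordinaryHypergeometricCoefficient_succ_s6 (A := A) (B := B) hC (n + 1)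
    push_cast at this
    linear_combination (n + 1) * z ^ n * this

end Hyp2F1

section HypergeometricODE

variable {γ σ P : ℝ} {y y' y'' : ℝ → ℝ}

theorem hasDerivAt_rpow_mul_one_sub_rpow_mul_of_ode {x : ℝ} (hx : x ∈ Ioo (0 : ℝ) 1)
    (hy' : HasDerivAt y' (y'' x) x)
    (hode : x * (1 - x) * y'' x + (γ - σ * x) * y' x - P * y x = 0) :
    HasDerivAt (fun t => t ^ γ * (1 - t) ^ (σ - γ) * y' t)
      (P * x ^ (γ - 1) * (1 - x) ^ (σ - γ - 1) * y x) x := by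
  obtain ⟨hx0, hx1⟩ := hx
  have h1x : 0 < 1 - x := sub_pos.mpr hx1
  have hpow : HasDerivAt (fun t : ℝ => t ^ γ) (γ * x ^ (γ - 1)) x :=
    Real.hasDerivAt_rpow_const (Or.inl hx0.ne')
  have hpow' : HasDerivAt (fun t : ℝ => (1 - t) ^ (σ - γ))
      (-1 * (σ - γ) * (1 - x) ^ (σ - γ - 1)) x :=
    ((hasDerivAt_id x).const_sub 1).rpow_const (Or.inl h1x.ne')
  refine ((hpow.mul hpow').mul hy').congr_deriv ?_
  simp only [Pi.mul_apply]
  rw [Real.rpow_sub_one hx0.ne', Real.rpow_sub_one h1x.ne']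
  field_simp
  linear_combination hode

variable (hγ : 0 < γ) (hP : 0 < P)
    (hy : ∀ x ∈ Ico (0 : ℝ) 1, HasDerivAt y (y' x) x)
    (hy' : ∀ x ∈ Ico (0 : ℝ) 1, HasDerivAt y' (y'' x) x)
    (hode : ∀ x ∈ Ioo (0 : ℝ) 1, x * (1 - x) * y'' x + (γ - σ * x) * y' x - P * y x = 0)
include hγ hP hy hy' hode

theorem strictMonoOn_Icc_of_hypergeometricODE {x : ℝ} (hx : x < 1)
    (hpos : ∀ t ∈ Ioo 0 x, 0 < y t) : StrictMonoOn y (Icc 0 x) := by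
  have hsub : Icc 0 x ⊆ Ico (0 : ℝ) 1 := fun t ht => ⟨ht.1, ht.2.trans_lt hx⟩
  have hsub' : Ioo 0 x ⊆ Ioo (0 : ℝ) 1 := fun t ht => ⟨ht.1, ht.2.trans hx⟩
  set w := fun t : ℝ => t ^ γ * (1 - t) ^ (σ - γ) * y' t
  have hw : StrictMonoOn w (Icc 0 x) := by
    refine strictMonoOn_of_deriv_pos (convex_Icc 0 x) ?_ fun t ht => ?_
    · refine ((continuousOn_id.rpow_const fun _ _ => Or.inr hγ.le).mul
        ((continuousOn_const.sub continuousOn_id).rpow_const fun t ht => Or.inl ?_)).mul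
        fun t ht => (hy' t (hsub ht)).continuousAt.continuousWithinAt
      exact (sub_pos.mpr ((hsub ht).2)).ne'
    rw [interior_Icc] at ht
    have h1t : 0 < 1 - t := sub_pos.mpr (hsub' ht).2
    rw [(hasDerivAt_rpow_mul_one_sub_rpow_mul_of_ode (hsub' ht)
      (hy' t (hsub (Ioo_subset_Icc_self ht))) (hode t (hsub' ht))).deriv]
    have := Real.rpow_pos_of_pos ht.1 (γ - 1)
    have := Real.rpow_pos_of_pos h1t (σ - γ - 1)
    have := hpos t ht
    positivity
  refine strictMonoOn_of_deriv_pos (convex_Icc 0 x)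
    (fun t ht => (hy t (hsub ht)).continuousAt.continuousWithinAt) fun t ht => ?_
  rw [interior_Icc] at ht
  rw [(hy t (hsub (Ioo_subset_Icc_self ht))).deriv]
  have hw0 : w 0 < w t := hw (left_mem_Icc.mpr (ht.1.trans ht.2).le) (Ioo_subset_Icc_self ht) ht.1
  have hweight : 0 < t ^ γ * (1 - t) ^ (σ - γ) :=
    mul_pos (Real.rpow_pos_of_pos ht.1 γ) (Real.rpow_pos_of_pos (sub_pos.mpr (hsub' ht).2) _)
  simp only [w, Real.zero_rpow hγ.ne', zero_mul] at hw0
  exact pos_of_mul_pos_right hw0 hweight.le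

theorem strictMonoOn_of_hypergeometricODE (hy0 : 0 < y 0) : StrictMonoOn y (Ico 0 1) := by
  have hpos : ∀ x ∈ Ico (0 : ℝ) 1, 0 < y x := by
    by_contra! ⟨x, hx, hyx⟩
    have hcont : ContinuousOn y (Icc 0 x) :=
      fun t ht => (hy t ⟨ht.1, ht.2.trans_lt hx.2⟩).continuousAt.continuousWithinAt
    obtain ⟨z, ⟨hz, hyz⟩, hleast⟩ : ∃ z, IsLeast (Icc 0 x ∩ y ⁻¹' Iic 0) z :=
      (isCompact_Icc.of_isClosed_subset (hcont.preimage_isClosed_of_isClosed isClosed_Icc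
        isClosed_Iic) inter_subset_left).exists_isLeast ⟨x, ⟨hx.1, le_rfl⟩, hyx⟩
    have hz0 : 0 < z := hz.1.lt_of_ne fun h => by subst h; exact (hyz.trans_lt hy0).false
    have hmono := strictMonoOn_Icc_of_hypergeometricODE hγ hP hy hy' hode (hz.2.trans_lt hx.2)
      fun t ht => lt_of_not_ge fun hyt =>
        (hleast ⟨⟨ht.1.le, ht.2.le.trans hz.2⟩, hyt⟩).not_gt ht.2
    exact (hy0.trans (hmono (left_mem_Icc.mpr hz0.le) (right_mem_Icc.mpr hz0.le) hz0)).not_ge hyz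
  intro a ha b hb hab
  exact strictMonoOn_Icc_of_hypergeometricODE hγ hP hy hy' hode hb.2
    (fun t ht => hpos t ⟨ht.1.le, ht.2.trans hb.2⟩) ⟨ha.1, hab.le⟩ ⟨hb.1, le_rfl⟩ hab

end HypergeometricODE

/-- If C > 0 and AB > 0, then ₂F₁(A,B,C;·) is strictly increasing on [0,1). -/
theorem hyp2F1_strictMonoOn (A B C : ℝ) (hC : 0 < C) (hAB : 0 < A * B) :
    StrictMonoOn (hyp2F1 A B C) (Set.Ico (0 : ℝ) 1) := by
  have habs : ∀ x ∈ Ico (0 : ℝ) 1, |x| < 1 := fun x hx => abs_lt.mpr ⟨by linarith [hx.1], hx.2⟩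
  refine strictMonoOn_of_hypergeometricODE hC hAB (σ := A + B + 1)
    (y' := fun x => A * B / C * hyp2F1 (A + 1) (B + 1) (C + 1) x)
    (y'' := fun x =>
      A * B / C * ((A + 1) * (B + 1) / (C + 1) * hyp2F1 (A + 2) (B + 2) (C + 2) x))
    (fun x hx => hasDerivAt_hyp2F1 hC (habs x hx)) (fun x hx => ?_)
    (fun x hx => hyp2F1_ode hC (habs x (Ioo_subset_Ico_self hx)))
    (by rw [hyp2F1_eq_ordinaryHypergeometric, ordinaryHypergeometric_zero]; exact one_pos)
  have h := (hasDerivAt_hyp2F1 (A := A + 1) (B := B + 1) (C := C + 1) (by linarith)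
    (habs x hx)).const_mul (A * B / C)
  simp only [add_assoc, one_add_one_eq_two] at h
  exact h
end

section
/- For real parameters A, B, C with C − A − B not an integer, the function F(z) = (1−z)^{C−A−B} ₂F₁(C−A, C−B, 1+C−A−B; 1−z) satisfies Euler's hypergeometric differential equation z(1−z)F''(z) + (C − (A+B+1)z)F'(z) − AB·F(z) = 0 on (0,1). -/
open Polynomial Set Filter

/-!
Write G(w) = ₂F₁(a, b, c; w) = ∑ fₙ wⁿ. The coefficients obey
(n + 1)(n + c) fₙ₊₁ = (n + a)(n + b) fₙ, which is the hypergeometric equation read off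
coefficientwise: w G'' + c G' and w (w G'' + (a + b + 1) G') + a b G are both
∑ (n + a)(n + b) fₙ wⁿ. For c = 1 + C - A - B, not a nonpositive integer, the recurrence also
forces limsup |fₙ₊₁ / fₙ| ≤ 1, so the series may be differentiated termwise on |w| < 1.
Finally, for F(z) = (1 - z)ˢ G(1 - z) with s = C - A - B, the equation for F at z is (1 - z)ˢ
times the equation for G with parameters (C - A, C - B, 1 + s) at 1 - z.
-/

open Topology

/-- `limsup |f (n + 1)| / |f n| ≤ 1`, in a form that allows vanishing coefficients. -/
def RatioLimsupLeOne (f : ℕ → ℝ) : Prop :=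
  ∀ ρ > 1, ∀ᶠ n in atTop, |f (n + 1)| ≤ ρ * |f n|

def derivCoeff (f : ℕ → ℝ) (n : ℕ) : ℝ := (n + 1) * f (n + 1)

theorem eventually_abs_add_le_mul_abs_add (a c : ℝ) {ρ : ℝ} (hρ : 1 < ρ) :
    ∀ᶠ n : ℕ in atTop, |n + a| ≤ ρ * |n + c| := by
  have h : Tendsto (fun n : ℕ => (ρ - 1) * (n : ℝ)) atTop atTop :=
    tendsto_natCast_atTop_atTop.const_mul_atTop (sub_pos.2 hρ)
  filter_upwards [h.eventually_ge_atTop (|a| + ρ * |c|)] with n hn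
  calc |(n : ℝ) + a| ≤ n + |a| := by simpa using abs_add_le (n : ℝ) a
    _ ≤ ρ * (n - |c|) := by linarith
    _ ≤ ρ * |n + c| := by gcongr; linarith [neg_abs_le c, le_abs_self ((n : ℝ) + c)]

theorem one_lt_sqrt_of_one_lt {ρ : ℝ} (hρ : 1 < ρ) : 1 < √ρ :=
  (Real.lt_sqrt zero_le_one).2 (by simpa using hρ)

namespace RatioLimsupLeOne

variable {f : ℕ → ℝ}

theorem summable_abs_mul_pow (hf : RatioLimsupLeOne f) {r : ℝ} (hr0 : 0 ≤ r) (hr1 : r < 1) :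
    Summable fun n => |f n| * r ^ n := by
  have hρ : 1 < 2 / (1 + r) := by rw [lt_div_iff₀ (by linarith)]; linarith
  have hρr : 2 / (1 + r) * r < 1 := by
    rw [div_mul_eq_mul_div, div_lt_one (by linarith)]; linarith
  refine summable_of_ratio_norm_eventually_le hρr ?_
  filter_upwards [hf _ hρ] with n hn
  rw [Real.norm_of_nonneg (by positivity), Real.norm_of_nonneg (by positivity), pow_succ]
  calc |f (n + 1)| * (r ^ n * r) ≤ 2 / (1 + r) * |f n| * (r ^ n * r) := by gcongr
    _ = 2 / (1 + r) * r * (|f n| * r ^ n) := by ring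

theorem summable_mul_pow (hf : RatioLimsupLeOne f) {w : ℝ} (hw : |w| < 1) :
    Summable fun n => f n * w ^ n :=
  .of_norm <| by
    simpa only [norm_mul, norm_pow, Real.norm_eq_abs] using
      hf.summable_abs_mul_pow (abs_nonneg w) hw

theorem derivCoeff (hf : RatioLimsupLeOne f) : RatioLimsupLeOne (derivCoeff f) := by
  intro ρ hρ
  have hs := one_lt_sqrt_of_one_lt hρ
  filter_upwards [eventually_abs_add_le_mul_abs_add 2 1 hs,
    (tendsto_add_atTop_nat 1).eventually (hf _ hs)] with n hn hfn
  calc |_root_.derivCoeff f (n + 1)| = |(n : ℝ) + 2| * |f (n + 1 + 1)| := by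
        rw [_root_.derivCoeff, abs_mul]; push_cast; ring_nf
    _ ≤ (√ρ * |(n : ℝ) + 1|) * (√ρ * |f (n + 1)|) := by gcongr
    _ = √ρ * √ρ * |_root_.derivCoeff f n| := by
        rw [_root_.derivCoeff, abs_mul]; ring
    _ = ρ * |_root_.derivCoeff f n| := by rw [Real.mul_self_sqrt (by linarith)]

end RatioLimsupLeOne

theorem hasDerivAt_tsum_mul_pow_s9 {f : ℕ → ℝ} (hf : RatioLimsupLeOne f) {w : ℝ}
    (hw : |w| < 1) :
    HasDerivAt (fun x => ∑' n, f n * x ^ n) (∑' n, derivCoeff f n * w ^ n) w := by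
  obtain ⟨r, hwr, hr1⟩ := exists_between hw
  have hr0 : 0 ≤ r := (abs_nonneg w).trans hwr.le
  have hbound :
      ∀ n, ∀ y ∈ Ioo (-r) r, ‖f n * (n * y ^ (n - 1))‖ ≤ |f n| * (n * r ^ (n - 1)) := by
    intro n y hy
    rw [Real.norm_eq_abs, abs_mul, abs_mul, abs_pow, Nat.abs_cast]
    gcongr
    exact (abs_lt.2 hy).le
  have hu : Summable fun n : ℕ => |f n| * (n * r ^ (n - 1)) := by
    rw [← summable_nat_add_iff 1]
    refine (hf.derivCoeff.summable_abs_mul_pow hr0 hr1).congr fun n => ?_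
    rw [derivCoeff, abs_mul, Nat.add_sub_cancel, abs_of_nonneg (by positivity)]
    push_cast; ring
  have hderiv := hasDerivAt_tsum_of_isPreconnected hu isOpen_Ioo isPreconnected_Ioo
    (fun n y _ => (hasDerivAt_pow n y).const_mul (f n)) hbound (abs_lt.1 hwr)
    (hf.summable_mul_pow hw) (abs_lt.1 hwr)
  have hshift (n : ℕ) :
      f (n + 1) * (((n + 1 : ℕ) : ℝ) * w ^ (n + 1 - 1)) = derivCoeff f n * w ^ n := by
    rw [derivCoeff, Nat.add_sub_cancel]; push_cast; ring
  refine hderiv.congr_deriv ?_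
  rw [tsum_eq_zero_add' (by simpa only [hshift] using hf.derivCoeff.summable_mul_pow hw)]
  simp only [hshift, CharP.cast_eq_zero, zero_mul, mul_zero, zero_add]

theorem HasSum.natCast_mul_of_derivCoeff {g : ℕ → ℝ} {w s : ℝ}
    (h : HasSum (fun n => derivCoeff g n * w ^ n) s) :
    HasSum (fun n => n * g n * w ^ n) (w * s) := by
  rw [← hasSum_nat_add_iff' 1]
  simpa [derivCoeff, pow_succ, mul_comm, mul_left_comm, mul_assoc] using h.mul_left w

theorem ode_of_coeff_recurrence {f : ℕ → ℝ} {a b c w : ℝ}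
    (hf : ∀ n : ℕ, (n + 1) * (n + c) * f (n + 1) = (n + a) * (n + b) * f n)
    (h0 : Summable fun n => f n * w ^ n) (h1 : Summable fun n => derivCoeff f n * w ^ n)
    (h2 : Summable fun n => derivCoeff (derivCoeff f) n * w ^ n) :
    w * (1 - w) * ∑' n, derivCoeff (derivCoeff f) n * w ^ n
      + (c - (a + b + 1) * w) * ∑' n, derivCoeff f n * w ^ n
      - a * b * ∑' n, f n * w ^ n = 0 := by
  set F₀ := ∑' n, f n * w ^ n
  set F₁ := ∑' n, derivCoeff f n * w ^ n
  set F₂ := ∑' n, derivCoeff (derivCoeff f) n * w ^ n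
  have hF₂ := h2.hasSum.natCast_mul_of_derivCoeff
  have lhs : HasSum (fun n => (n + a) * (n + b) * f n * w ^ n) (w * F₂ + c * F₁) := by
    refine (hF₂.add (h1.hasSum.mul_left c)).congr_fun fun n => ?_
    simp only [derivCoeff, ← hf]; ring
  have rhs : HasSum (fun n => (n + a) * (n + b) * f n * w ^ n)
      (w * (w * F₂ + (a + b + 1) * F₁) + a * b * F₀) := by
    have h : HasSum (fun n => derivCoeff (fun k => (k + a + b) * f k) n * w ^ n)
        (w * F₂ + (a + b + 1) * F₁) := by
      refine (hF₂.add (h1.hasSum.mul_left (a + b + 1))).congr_fun fun n => ?_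
      simp only [derivCoeff]; push_cast; ring
    refine (h.natCast_mul_of_derivCoeff.add (h0.hasSum.mul_left (a * b))).congr_fun fun n => ?_
    ring
  linear_combination lhs.unique rhs

noncomputable def hypCoeff (a b c : ℝ) (n : ℕ) : ℝ :=
  (ascPochhammer ℝ n).eval a * (ascPochhammer ℝ n).eval b / (ascPochhammer ℝ n).eval c /
    n.factorial

section Hypergeometric

variable {a b c : ℝ}

theorem hyp2F1_eq_tsum : hyp2F1 a b c = fun z => ∑' n, hypCoeff a b c n * z ^ n := by
  ext z
  exact tsum_congr fun n => by rw [hypTerm, hypCoeff]; ring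

theorem hypCoeff_succ_mul (hc : ∀ k : ℕ, c + k ≠ 0) (n : ℕ) :
    (n + 1) * (n + c) * hypCoeff a b c (n + 1) = (n + a) * (n + b) * hypCoeff a b c n := by
  have hpoch : (ascPochhammer ℝ n).eval c ≠ 0 := by
    rw [Ne, ascPochhammer_eval_eq_zero_iff]
    rintro ⟨k, -, hk⟩
    exact hc k (by linarith)
  have hcn := hc n
  simp only [hypCoeff, ascPochhammer_succ_eval, Nat.factorial_succ]
  push_cast
  field_simp
  ring

theorem ratioLimsupLeOne_hypCoeff (hc : ∀ k : ℕ, c + k ≠ 0) :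
    RatioLimsupLeOne (hypCoeff a b c) := by
  intro ρ hρ
  have hs := one_lt_sqrt_of_one_lt hρ
  filter_upwards [eventually_abs_add_le_mul_abs_add a 1 hs,
    eventually_abs_add_le_mul_abs_add b c hs] with n ha hb
  have hpos : 0 < |(n : ℝ) + 1| * |n + c| :=
    mul_pos (abs_pos.2 (by positivity)) (abs_pos.2 (by rw [add_comm]; exact hc n))
  refine le_of_mul_le_mul_left ?_ hpos
  calc |(n : ℝ) + 1| * |n + c| * |hypCoeff a b c (n + 1)|
      = |(n : ℝ) + a| * |n + b| * |hypCoeff a b c n| := by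
        simp only [← abs_mul, hypCoeff_succ_mul hc]
    _ ≤ (√ρ * |(n : ℝ) + 1|) * (√ρ * |n + c|) * |hypCoeff a b c n| := by gcongr
    _ = √ρ * √ρ * (|(n : ℝ) + 1| * |n + c| * |hypCoeff a b c n|) := by ring
    _ = |(n : ℝ) + 1| * |n + c| * (ρ * |hypCoeff a b c n|) := by
        rw [Real.mul_self_sqrt (by linarith)]; ring

theorem hasDerivAt_hyp2F1_s9 (hc : ∀ k : ℕ, c + k ≠ 0) {w : ℝ} (hw : |w| < 1) :
    HasDerivAt (hyp2F1 a b c) (∑' n, derivCoeff (hypCoeff a b c) n * w ^ n) w := by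
  rw [hyp2F1_eq_tsum]
  exact hasDerivAt_tsum_mul_pow_s9 (ratioLimsupLeOne_hypCoeff hc) hw

theorem hasDerivAt_deriv_hyp2F1 (hc : ∀ k : ℕ, c + k ≠ 0) {w : ℝ} (hw : |w| < 1) :
    HasDerivAt (deriv (hyp2F1 a b c))
      (∑' n, derivCoeff (derivCoeff (hypCoeff a b c)) n * w ^ n) w := by
  refine (hasDerivAt_tsum_mul_pow_s9 (ratioLimsupLeOne_hypCoeff hc).derivCoeff hw)
    |>.congr_of_eventuallyEq ?_
  filter_upwards [(isOpen_lt continuous_abs continuous_const).mem_nhds hw] with x hx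
  exact (hasDerivAt_hyp2F1_s9 hc hx).deriv

theorem hyp2F1_ode_s9 (hc : ∀ k : ℕ, c + k ≠ 0) {w : ℝ} (hw : |w| < 1) :
    w * (1 - w) * deriv (deriv (hyp2F1 a b c)) w
      + (c - (a + b + 1) * w) * deriv (hyp2F1 a b c) w - a * b * hyp2F1 a b c w = 0 := by
  have hf := ratioLimsupLeOne_hypCoeff (a := a) (b := b) hc
  rw [(hasDerivAt_deriv_hyp2F1 hc hw).deriv, (hasDerivAt_hyp2F1_s9 hc hw).deriv, hyp2F1_eq_tsum]
  exact ode_of_coeff_recurrence (hypCoeff_succ_mul hc) (hf.summable_mul_pow hw)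
    (hf.derivCoeff.summable_mul_pow hw) (hf.derivCoeff.derivCoeff.summable_mul_pow hw)

end Hypergeometric

theorem HasDerivAt.rpow_one_sub_mul_comp {G : ℝ → ℝ} {G' s x : ℝ}
    (hG : HasDerivAt G G' (1 - x)) (hx : x < 1) :
    HasDerivAt (fun x => (1 - x) ^ s * G (1 - x))
      (-(s * ((1 - x) ^ (s - 1) * G (1 - x)) + (1 - x) ^ s * G')) x := by
  have hlin : HasDerivAt (fun x : ℝ => 1 - x) (-1) x := (hasDerivAt_id x).const_sub 1
  have hpow := (Real.hasDerivAt_rpow_const (p := s) (Or.inl (sub_pos.2 hx).ne')).comp x hlin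
  refine (hpow.mul (hG.comp x hlin)).congr_deriv ?_
  simp only [Function.comp_apply]
  ring

theorem ode_rpow_one_sub_mul_comp_one_sub {G : ℝ → ℝ} {A B C z : ℝ} (hz : z < 1)
    (hG : ∀ᶠ w in 𝓝 (1 - z), DifferentiableAt ℝ G w)
    (hG' : DifferentiableAt ℝ (deriv G) (1 - z))
    (hode : (1 - z) * (1 - (1 - z)) * deriv (deriv G) (1 - z)
      + (1 + C - A - B - (C - A + (C - B) + 1) * (1 - z)) * deriv G (1 - z)
      - (C - A) * (C - B) * G (1 - z) = 0) :
    z * (1 - z) * deriv (deriv fun x => (1 - x) ^ (C - A - B) * G (1 - x)) z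
      + (C - (A + B + 1) * z) * deriv (fun x => (1 - x) ^ (C - A - B) * G (1 - x)) z
      - A * B * ((1 - z) ^ (C - A - B) * G (1 - z)) = 0 := by
  set s := C - A - B
  have hderiv : deriv (fun x => (1 - x) ^ s * G (1 - x)) =ᶠ[𝓝 z]
      fun x => -(s * ((1 - x) ^ (s - 1) * G (1 - x)) + (1 - x) ^ s * deriv G (1 - x)) := by
    have hcont : Tendsto (fun x : ℝ => 1 - x) (𝓝 z) (𝓝 (1 - z)) :=
      (continuous_const.sub continuous_id).tendsto z
    filter_upwards [hcont.eventually hG, eventually_lt_nhds hz] with x hGx hx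
    exact (hGx.hasDerivAt.rpow_one_sub_mul_comp hx).deriv
  have hG₀ := hG.self_of_nhds.hasDerivAt
  have hderiv' : HasDerivAt
      (fun x => -(s * ((1 - x) ^ (s - 1) * G (1 - x)) + (1 - x) ^ s * deriv G (1 - x))) _ z :=
    (((hG₀.rpow_one_sub_mul_comp hz).const_mul s).add
      (hG'.hasDerivAt.rpow_one_sub_mul_comp hz)).neg
  rw [hderiv.deriv_eq, hderiv'.deriv, (hG₀.rpow_one_sub_mul_comp hz).deriv]
  have hu : 1 - z ≠ 0 := (sub_pos.2 hz).ne'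
  have e₁ : (1 - z) ^ (s - 1) = (1 - z) ^ (s - 1 - 1) * (1 - z) := by
    rw [← Real.rpow_add_one hu]; ring_nf
  have e₀ : (1 - z) ^ s = (1 - z) ^ (s - 1 - 1) * (1 - z) * (1 - z) := by
    rw [← e₁, ← Real.rpow_add_one hu]; ring_nf
  rw [e₀, e₁]
  linear_combination (1 - z) ^ (s - 1 - 1) * (1 - z) * (1 - z) * hode

/-- If C−A−B is not an integer, then
z ↦ (1−z)^{C−A−B} ₂F₁(C−A, C−B, 1+C−A−B; 1−z) satisfies Euler's hypergeometric
differential equation on (0,1). -/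
theorem second_solution_at_one (A B C : ℝ) (h : ∀ n : ℤ, C - A - B ≠ (n : ℝ)) :
    ∀ z ∈ Set.Ioo (0 : ℝ) 1,
      z * (1 - z) *
          deriv (deriv (fun x : ℝ =>
            (1 - x) ^ (C - A - B) * hyp2F1 (C - A) (C - B) (1 + C - A - B) (1 - x))) z
        + (C - (A + B + 1) * z) *
          deriv (fun x : ℝ =>
            (1 - x) ^ (C - A - B) * hyp2F1 (C - A) (C - B) (1 + C - A - B) (1 - x)) z
        - A * B * ((1 - z) ^ (C - A - B) * hyp2F1 (C - A) (C - B) (1 + C - A - B) (1 - z))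
        = 0 := by
  intro z hz
  have hc : ∀ k : ℕ, 1 + C - A - B + k ≠ 0 := fun k hk => h (-k - 1) (by push_cast; linarith)
  have hw : |1 - z| < 1 := abs_sub_lt_iff.2 ⟨by linarith [hz.1], by linarith [hz.2]⟩
  have hdiff :
      ∀ᶠ w in 𝓝 (1 - z), DifferentiableAt ℝ (hyp2F1 (C - A) (C - B) (1 + C - A - B)) w :=
    ((isOpen_lt continuous_abs continuous_const).eventually_mem hw).mono fun w hw' =>
      (hasDerivAt_hyp2F1_s9 hc hw').differentiableAt
  exact ode_rpow_one_sub_mul_comp_one_sub hz.2 hdiff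
    (hasDerivAt_deriv_hyp2F1 hc hw).differentiableAt (hyp2F1_ode_s9 hc hw)
end
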